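/- arXiv:1606.05792 — 3 statements merged into one kernel-verified Lean document; each statement's English description precedes it below -/
import Mathlib

section
/- For every positive integer m, the tail sums satisfy lim_{ε → 0+} ∑_{i ≥ m} sin²(iε/2)/(i² ε) = π/4. -/
open Real Filter Topology Finset

/-!
Writing `sin² = (1 - cos) / 2`, the Fourier series of the second Bernoulli polynomial gives
`∑ sin² (n t) / n² = t (π - t) / 2` for `t ∈ [0, π]`, so the full series equals `π/4 - ε/8` for
`0 < ε ≤ 2π`. Each of the finitely many terms with `i < m` is at most `ε/4`, because
`|sin x| ≤ |x|`, so removing them does not change the limit.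
-/

theorem HasSum.ite_le_sub_sum_range {G : Type*} [AddCommGroup G] [TopologicalSpace G]
    [IsTopologicalAddGroup G] {f : ℕ → G} {a : G} (hf : HasSum f a) (m : ℕ) :
    HasSum (fun i => if m ≤ i then f i else 0) (a - ∑ i ∈ range m, f i) := by
  have head : HasSum (fun i => if i < m then f i else 0) (∑ i ∈ range m, f i) := by
    convert hasSum_sum_of_ne_finset_zero (L := SummationFilter.unconditional ℕ) (s := range m)
      (fun i hi => if_neg (by simpa using hi) : ∀ i ∉ range m, (if i < m then f i else 0) = 0)
      using 1
    exact (sum_congr rfl fun i hi => if_pos (mem_range.mp hi)).symm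
  convert hf.sub head using 1
  ext i
  split_ifs <;> first | omega | simp

theorem hasSum_cos_div_sq {x : ℝ} (hx : x ∈ Set.Icc 0 1) :
    HasSum (fun n : ℕ => cos (2 * π * n * x) / (n : ℝ) ^ 2) (π ^ 2 * (x ^ 2 - x + 1 / 6)) := by
  have h := hasSum_one_div_nat_pow_mul_cos one_ne_zero hx
  norm_num [Nat.factorial, Polynomial.bernoulli, sum_range_succ, bernoulli_two] at h
  convert h using 1
  · ext n; ring
  · ring

theorem hasSum_sin_sq_div_sq {t : ℝ} (ht : t ∈ Set.Icc 0 π) :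
    HasSum (fun n : ℕ => sin (n * t) ^ 2 / (n : ℝ) ^ 2) (t * (π - t) / 2) := by
  have hx : t / π ∈ Set.Icc (0 : ℝ) 1 :=
    ⟨div_nonneg ht.1 pi_pos.le, div_le_one_of_le₀ ht.2 pi_pos.le⟩
  have h := (hasSum_zeta_two.sub (hasSum_cos_div_sq hx)).div_const 2
  rw [show (π ^ 2 / 6 - π ^ 2 * ((t / π) ^ 2 - t / π + 1 / 6)) / 2 = t * (π - t) / 2 by
    field_simp; ring] at h
  refine h.congr_fun fun n => ?_
  rw [sin_sq_eq_half_sub, show 2 * π * n * (t / π) = 2 * (n * t) by field_simp]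
  ring

theorem hasSum_sin_sq_div_sq_mul {ε : ℝ} (hε : 0 < ε) (hε' : ε ≤ 2 * π) :
    HasSum (fun n : ℕ => sin (n * ε / 2) ^ 2 / ((n : ℝ) ^ 2 * ε)) (π / 4 - ε / 8) := by
  have ht : ε / 2 ∈ Set.Icc 0 π := ⟨by positivity, by linarith⟩
  have h := (hasSum_sin_sq_div_sq ht).div_const ε
  rw [show ε / 2 * (π - ε / 2) / 2 / ε = π / 4 - ε / 8 by field_simp; ring] at h
  exact h.congr_fun fun n => by rw [mul_div_assoc, div_div]

theorem sin_sq_div_sq_mul_le (x : ℝ) {ε : ℝ} (hε : 0 ≤ ε) :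
    sin (x * ε / 2) ^ 2 / (x ^ 2 * ε) ≤ ε / 4 := by
  rcases (by positivity : 0 ≤ x ^ 2 * ε).eq_or_lt with h | h
  · rw [← h, div_zero]; positivity
  · rw [div_le_iff₀ h]
    calc sin (x * ε / 2) ^ 2 ≤ (x * ε / 2) ^ 2 := sin_sq_le_sq
      _ = ε / 4 * (x ^ 2 * ε) := by ring

theorem tendsto_sin_sq_div_sq_mul (x : ℝ) :
    Tendsto (fun ε => sin (x * ε / 2) ^ 2 / (x ^ 2 * ε)) (𝓝[>] 0) (𝓝 0) := by
  have hlin : Tendsto (fun ε : ℝ => ε / 4) (𝓝[>] 0) (𝓝 0) := by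
    simpa using ((tendsto_id (x := 𝓝 (0 : ℝ))).div_const 4).mono_left nhdsWithin_le_nhds
  refine tendsto_of_tendsto_of_tendsto_of_le_of_le' tendsto_const_nhds hlin ?_ ?_
  all_goals filter_upwards [self_mem_nhdsWithin] with ε (hε : 0 < ε)
  · positivity
  · exact sin_sq_div_sq_mul_le x hε.le

theorem stmt_7_general (m : ℕ) :
    Tendsto (fun ε : ℝ =>
        ∑' i : ℕ, if m ≤ i then Real.sin (i * ε / 2) ^ 2 / ((i : ℝ) ^ 2 * ε) else 0)
      (nhdsWithin 0 (Set.Ioi 0)) (nhds (π / 4)) := by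
  set f : ℕ → ℝ → ℝ := fun i ε => sin (i * ε / 2) ^ 2 / ((i : ℝ) ^ 2 * ε)
  have tail_eq : ∀ᶠ ε in 𝓝[>] 0,
      π / 4 - ε / 8 - ∑ i ∈ range m, f i ε = ∑' i, if m ≤ i then f i ε else 0 := by
    filter_upwards [Ioo_mem_nhdsGT two_pi_pos] with ε hε
    exact ((hasSum_sin_sq_div_sq_mul hε.1 hε.2.le).ite_le_sub_sum_range m).tsum_eq.symm
  have head : Tendsto (fun ε => ∑ i ∈ range m, f i ε) (𝓝[>] 0) (𝓝 0) := by
    simpa using tendsto_finsetSum (range m) fun i _ => tendsto_sin_sq_div_sq_mul i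
  have main_part : Tendsto (fun ε : ℝ => π / 4 - ε / 8) (𝓝[>] 0) (𝓝 (π / 4)) := by
    simpa using ((tendsto_id (x := 𝓝 (0 : ℝ))).div_const 8).const_sub (π / 4)
      |>.mono_left nhdsWithin_le_nhds
  simpa using (main_part.sub head).congr' tail_eq

theorem stmt_7 (m : ℕ) (hm : 0 < m) :
    Tendsto (fun ε : ℝ =>
        ∑' i : ℕ, if m ≤ i then Real.sin (i * ε / 2) ^ 2 / ((i : ℝ) ^ 2 * ε) else 0)
      (nhdsWithin 0 (Set.Ioi 0)) (nhds (π / 4)) :=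
  stmt_7_general m
end

section
/- Let u : [0,T] → ℝ be continuous, v : [0,T] → ℝ continuous and of bounded variation, and let (π_n) be a sequence of partitions 0 = t_0^n < t_1^n < ⋯ < t_{j_n}^n = T with mesh tending to 0, such that the quadratic sums Q_n = ∑_{k=1}^{j_n} (u(t_k^n) - u(t_{k-1}^n))² are bounded in n. Let f : ℝ² → ℝ be C^{1,1} and set F(x,w) = ∫_0^x f(y,w) dy. Then the symmetric (Stratonovich-type) Riemann sums ∑_{k=1}^{j_n} ((f(u(t_{k-1}^n), v(t_{k-1}^n)) + f(u(t_k^n), v(t_k^n)))/2)·(u(t_k^n) - u(t_{k-1}^n)) converge as n → ∞ to F(u(T), v(T)) - F(u(0), v(0)) - ∫_{(0,T]} F₂'(u(t), v(t)) dv(t). -/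
/-!
The left-point sums of `g = F₂ ∘ (u, v)` against `v` converge because a continuous function of
bounded variation is the difference of two Stieltjes functions, and against a Stieltjes function
`φ` the left-point sums differ from `∫ g ∂φ.measure` by at most `ε (φ b - φ a)` once the mesh is
below the modulus of continuity of `g` at scale `ε`.

For the symmetric sums, telescope `F (u T, v T) - F (u 0, v 0)` along the partition. On one
step, the increment of `F` in `x` is `∫ f(y, w₁) dy`, which the trapezoid rule approximates up to
`o((Δu)²)` since `f` is `C¹` in `x`; the change of `f` in `w` costs `O(|Δv| |Δu|)`, and the
increment of `F` in `w` is `F₂ Δv + o(|Δv|)`. Summed over the partition these errors vanish,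
because the quadratic sums of `u` and the variation of `v` are bounded.
-/

open Filter MeasureTheory Set Topology

lemma tendsto_of_forall_eventually_abs_sub_le_mul {ι : Type*} {l : Filter ι} {x : ι → ℝ}
    {c K : ℝ} (h : ∀ ε > 0, ∀ᶠ i in l, |x i - c| ≤ ε * K) : Tendsto x l (𝓝 c) := by
  refine Metric.tendsto_nhds.2 fun ε hε => ?_
  have hK : 0 < |K| + 1 := by positivity
  filter_upwards [h (ε / (|K| + 1)) (by positivity)] with i hi
  rw [Real.dist_eq]
  calc |x i - c| ≤ ε / (|K| + 1) * K := hi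
    _ ≤ ε / (|K| + 1) * |K| := by gcongr; exact le_abs_self K
    _ < ε / (|K| + 1) * (|K| + 1) := by gcongr; linarith
    _ = ε := div_mul_cancel₀ ε hK.ne'

lemma mem_Icc_of_monotoneOn_Iic {t : ℕ → ℝ} {m k : ℕ} (ht : MonotoneOn t (Iic m)) (hk : k ≤ m) :
    t k ∈ Icc (t 0) (t m) :=
  ⟨ht (Nat.zero_le m) hk (Nat.zero_le k), ht hk (mem_Iic.2 le_rfl) hk⟩

structure IsFinePartitionSeq (a b : ℝ) (j : ℕ → ℕ) (t : ℕ → ℕ → ℝ) : Prop where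
  zero : ∀ n, t n 0 = a
  last : ∀ n, t n (j n) = b
  monotoneOn : ∀ n, MonotoneOn (t n) (Iic (j n))
  mesh_le : ∀ δ > 0, ∀ᶠ n in atTop, ∀ k < j n, t n (k + 1) - t n k ≤ δ

namespace IsFinePartitionSeq

variable {a b : ℝ} {j : ℕ → ℕ} {t : ℕ → ℕ → ℝ}

lemma mem_Icc (h : IsFinePartitionSeq a b j t) (n : ℕ) {k : ℕ} (hk : k ≤ j n) :
    t n k ∈ Icc a b :=
  h.zero n ▸ h.last n ▸ mem_Icc_of_monotoneOn_Iic (h.monotoneOn n) hk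

lemma le (h : IsFinePartitionSeq a b j t) : a ≤ b := h.last 0 ▸ (h.mem_Icc 0 le_rfl).1

lemma eventually_forall_dist_le (h : IsFinePartitionSeq a b j t) {u : ℝ → ℝ}
    (hu : ContinuousOn u (Icc a b)) {ε : ℝ} (hε : 0 < ε) :
    ∀ᶠ n in atTop, ∀ k < j n, dist (u (t n (k + 1))) (u (t n k)) ≤ ε := by
  obtain ⟨δ, hδ, hu⟩ := Metric.uniformContinuousOn_iff_le.1
    (isCompact_Icc.uniformContinuousOn_of_continuous hu) ε hε
  filter_upwards [h.mesh_le δ hδ] with n hn k hk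
  refine hu _ (h.mem_Icc n hk) _ (h.mem_Icc n hk.le) ?_
  rw [Real.dist_eq, abs_of_nonneg (sub_nonneg.2 (h.monotoneOn n hk.le hk k.le_succ))]
  exact hn k hk

lemma sum_abs_sub_le_eVariationOn (h : IsFinePartitionSeq a b j t) {v : ℝ → ℝ}
    (hv : BoundedVariationOn v (Icc a b)) (n : ℕ) :
    ∑ k ∈ Finset.range (j n), |v (t n (k + 1)) - v (t n k)|
      ≤ (eVariationOn v (Icc a b)).toReal := by
  rw [← ENNReal.ofReal_le_iff_le_toReal hv, ENNReal.ofReal_sum_of_nonneg fun _ _ => abs_nonneg _]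
  simpa only [edist_dist, Real.dist_eq] using
    eVariationOn.sum_le_of_monotoneOn_Iic (f := v) (h.monotoneOn n) fun k hk => h.mem_Icc n hk

end IsFinePartitionSeq

namespace StieltjesFunction

variable (φ : StieltjesFunction ℝ)

lemma measureReal_Ioc {a b : ℝ} (hab : a ≤ b) : φ.measure.real (Ioc a b) = φ b - φ a := by
  rw [measureReal_def, φ.measure_Ioc, ENNReal.toReal_ofReal (sub_nonneg.2 (φ.mono hab))]

lemma abs_integral_sub_mul_le {g : ℝ → ℝ} {a b ε : ℝ} (hab : a ≤ b)
    (hg : IntervalIntegrable g φ.measure a b) (hε : ∀ x ∈ Ioc a b, |g x - g a| ≤ ε) :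
    |(∫ x in a..b, g x ∂φ.measure) - g a * (φ b - φ a)| ≤ ε * (φ b - φ a) := by
  have hconst : g a * (φ b - φ a) = ∫ _ in a..b, g a ∂φ.measure := by
    rw [intervalIntegral.integral_const', φ.measureReal_Ioc hab, Ioc_eq_empty_of_le hab,
      measureReal_empty, sub_zero, smul_eq_mul, mul_comm]
  rw [hconst, ← intervalIntegral.integral_sub hg intervalIntegrable_const,
    intervalIntegral.integral_of_le hab, ← φ.measureReal_Ioc hab]
  exact norm_setIntegral_le_of_norm_le_const (f := fun x => g x - g a) measure_Ioc_lt_top hε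

lemma abs_sum_sub_integral_le {g : ℝ → ℝ} {a b ε δ : ℝ} {m : ℕ} {t : ℕ → ℝ}
    (hg : ContinuousOn g (Icc a b))
    (hgδ : ∀ x ∈ Icc a b, ∀ y ∈ Icc a b, dist x y ≤ δ → dist (g x) (g y) ≤ ε)
    (ht0 : t 0 = a) (htm : t m = b) (ht : MonotoneOn t (Iic m))
    (hδ : ∀ k < m, t (k + 1) - t k ≤ δ) :
    |∑ k ∈ Finset.range m, g (t k) * (φ (t (k + 1)) - φ (t k)) - ∫ x in a..b, g x ∂φ.measure|
      ≤ ε * (φ b - φ a) := by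
  have hmem : ∀ k ≤ m, t k ∈ Icc a b := fun k hk => ht0 ▸ htm ▸ mem_Icc_of_monotoneOn_Iic ht hk
  have hstep : ∀ k < m, t k ≤ t (k + 1) := fun k hk => ht hk.le hk k.le_succ
  have hint : ∀ k < m, IntervalIntegrable g φ.measure (t k) (t (k + 1)) := fun k hk =>
    (hg.mono (uIcc_subset_Icc (hmem k hk.le) (hmem (k + 1) hk))).intervalIntegrable
  rw [← ht0, ← htm, ← intervalIntegral.sum_integral_adjacent_intervals hint,
    ← Finset.sum_range_sub (fun k => φ (t k)), Finset.mul_sum, ← Finset.sum_sub_distrib]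
  refine (Finset.abs_sum_le_sum_abs _ _).trans (Finset.sum_le_sum fun k hk => ?_)
  rw [Finset.mem_range] at hk
  rw [abs_sub_comm]
  refine φ.abs_integral_sub_mul_le (hstep k hk) (hint k hk) fun x hx => ?_
  have hxab : x ∈ Icc a b := ⟨(hmem k hk.le).1.trans hx.1.le, hx.2.trans (hmem (k + 1) hk).2⟩
  refine hgδ x hxab (t k) (hmem k hk.le) ?_
  rw [Real.dist_eq, abs_of_pos (sub_pos.2 hx.1)]
  linarith [hδ k hk, hx.2]

lemma tendsto_sum_mul_sub {g : ℝ → ℝ} {a b : ℝ} {j : ℕ → ℕ} {t : ℕ → ℕ → ℝ}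
    (h : IsFinePartitionSeq a b j t) (hg : ContinuousOn g (Icc a b)) :
    Tendsto (fun n => ∑ k ∈ Finset.range (j n), g (t n k) * (φ (t n (k + 1)) - φ (t n k)))
      atTop (𝓝 (∫ x in a..b, g x ∂φ.measure)) := by
  refine tendsto_of_forall_eventually_abs_sub_le_mul (K := φ b - φ a) fun ε hε => ?_
  obtain ⟨δ, hδ, hgδ⟩ := Metric.uniformContinuousOn_iff_le.1
    (isCompact_Icc.uniformContinuousOn_of_continuous hg) ε hε
  filter_upwards [h.mesh_le δ hδ] with n hn
  exact φ.abs_sum_sub_integral_le hg hgδ (h.zero n) (h.last n) (h.monotoneOn n) hn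

end StieltjesFunction

lemma BoundedVariationOn.exists_stieltjesFunction_sub {v : ℝ → ℝ} {a b : ℝ} (hab : a ≤ b)
    (hv : ContinuousOn v (Icc a b)) (hbv : BoundedVariationOn v (Icc a b)) :
    ∃ φ ψ : StieltjesFunction ℝ, EqOn v (φ - ψ) (Icc a b) := by
  -- Jordan decomposition `(V ± w) / 2` of the extension `w` of `v` by constants, whose
  -- variation function `V` is right-continuous because `w` is continuous.
  set clamp : ℝ → ℝ := fun x => max a (min x b)
  have hclamp : MapsTo clamp univ (Icc a b) := fun x _ =>
    ⟨le_max_left _ _, max_le hab (min_le_right _ _)⟩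
  have hclampmono : Monotone clamp := fun x y hxy => max_le_max le_rfl (min_le_min hxy le_rfl)
  set w := v ∘ clamp
  have hwc : Continuous w := hv.comp_continuous (by fun_prop) fun x => hclamp (mem_univ x)
  have hwbv : BoundedVariationOn w univ :=
    ne_top_of_le_ne_top hbv
      (eVariationOn.comp_le_of_monotoneOn v clamp (hclampmono.monotoneOn _) hclamp)
  have hloc := hwbv.locallyBoundedVariationOn
  set V := variationOnFromTo w univ a
  have hVc : ∀ x, ContinuousWithinAt V (Ici x) x := fun x =>
    hwbv.continuousWithinAt_variationOnFromTo_Ici hwc.continuousWithinAt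
  refine ⟨⟨fun x => (V x + w x) / 2, ?_,
      fun x => ((hVc x).add hwc.continuousWithinAt).div_const 2⟩,
    ⟨fun x => (V x - w x) / 2, ?_, fun x => ((hVc x).sub hwc.continuousWithinAt).div_const 2⟩,
    fun x hx => ?_⟩
  · intro x y hxy
    have := variationOnFromTo.add_self_monotoneOn hloc (mem_univ a) (mem_univ x) (mem_univ y) hxy
    dsimp only [Pi.add_apply] at this ⊢
    linarith
  · intro x y hxy
    have := variationOnFromTo.sub_self_monotoneOn hloc (mem_univ a) (mem_univ x) (mem_univ y) hxy
    dsimp only [Pi.sub_apply] at this ⊢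
    linarith
  · have : clamp x = x := by simp [clamp, hx.1, hx.2]
    simp only [Pi.sub_apply, w, Function.comp_apply, this]
    ring

lemma BoundedVariationOn.exists_tendsto_sum_mul_sub {g v : ℝ → ℝ} {a b : ℝ} {j : ℕ → ℕ}
    {t : ℕ → ℕ → ℝ} (h : IsFinePartitionSeq a b j t) (hg : ContinuousOn g (Icc a b))
    (hv : ContinuousOn v (Icc a b)) (hbv : BoundedVariationOn v (Icc a b)) :
    ∃ L, Tendsto (fun n => ∑ k ∈ Finset.range (j n), g (t n k) * (v (t n (k + 1)) - v (t n k)))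
      atTop (𝓝 L) := by
  obtain ⟨φ, ψ, hvφψ⟩ := hbv.exists_stieltjesFunction_sub h.le hv
  refine ⟨_, ((φ.tendsto_sum_mul_sub h hg).sub (ψ.tendsto_sum_mul_sub h hg)).congr fun n => ?_⟩
  rw [← Finset.sum_sub_distrib]
  refine Finset.sum_congr rfl fun k hk => ?_
  rw [Finset.mem_range] at hk
  rw [hvφψ (h.mem_Icc n hk), hvφψ (h.mem_Icc n hk.le), Pi.sub_apply, Pi.sub_apply]
  ring

lemma abs_sub_sub_mul_le_of_hasDerivAt {h h' : ℝ → ℝ} {a b c ε : ℝ}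
    (hd : ∀ y ∈ uIcc a b, HasDerivAt h (h' y) y) (hε : ∀ y ∈ uIcc a b, |h' y - c| ≤ ε) :
    |h b - h a - c * (b - a)| ≤ ε * |b - a| := by
  have hd' : ∀ y ∈ uIcc a b, HasDerivWithinAt (fun y => h y - c * y) (h' y - c) (uIcc a b) y :=
    fun y hy => ((hd y hy).sub ((hasDerivAt_id y).const_mul c)).hasDerivWithinAt.congr_deriv
      (by ring)
  have := convex_uIcc a b |>.norm_image_sub_le_of_norm_hasDerivWithin_le hd' hε
    left_mem_uIcc right_mem_uIcc
  simp only [Real.norm_eq_abs] at this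
  convert this using 2
  ring

lemma abs_integral_sub_trapezoid_le {h h' : ℝ → ℝ} {a b c ε : ℝ}
    (hd : ∀ y ∈ uIcc a b, HasDerivAt h (h' y) y) (hε : ∀ y ∈ uIcc a b, |h' y - c| ≤ ε) :
    |(∫ y in a..b, h y) - (h a + h b) / 2 * (b - a)| ≤ 2 * ε * (b - a) ^ 2 := by
  have hε₀ : 0 ≤ ε := (abs_nonneg _).trans (hε a left_mem_uIcc)
  set r : ℝ → ℝ := fun y => h y - h a - c * (y - a)
  have hr : ∀ y ∈ uIcc a b, |r y| ≤ ε * |b - a| := fun y hy => by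
    have hsub : uIcc a y ⊆ uIcc a b := uIcc_subset_uIcc left_mem_uIcc hy
    calc |r y| ≤ ε * |y - a| :=
          abs_sub_sub_mul_le_of_hasDerivAt (fun z hz => hd z (hsub hz)) fun z hz => hε z (hsub hz)
      _ ≤ ε * |b - a| := mul_le_mul_of_nonneg_left (abs_sub_left_of_mem_uIcc hy) hε₀
  have hhc : ContinuousOn h (uIcc a b) := fun y hy => (hd y hy).continuousAt.continuousWithinAt
  have hint : ∫ y in a..b, r y = (∫ y in a..b, h y) - h a * (b - a) - c * ((b - a) ^ 2 / 2) := by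
    have hhi : IntervalIntegrable h volume a b := hhc.intervalIntegrable
    simp only [r]
    rw [intervalIntegral.integral_sub (hhi.sub intervalIntegrable_const)
        ((by fun_prop : Continuous fun y => c * (y - a)).intervalIntegrable _ _),
      intervalIntegral.integral_sub hhi intervalIntegrable_const,
      intervalIntegral.integral_const_mul, intervalIntegral.integral_comp_sub_right (fun y => y),
      integral_id, intervalIntegral.integral_const, smul_eq_mul]
    ring
  have h1 : |∫ y in a..b, r y| ≤ ε * |b - a| * |b - a| :=
    intervalIntegral.norm_integral_le_of_norm_le_const (f := r) fun y hy =>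
      hr y (uIoc_subset_uIcc hy)
  have h2 : |r b| ≤ ε * |b - a| := hr b right_mem_uIcc
  calc |(∫ y in a..b, h y) - (h a + h b) / 2 * (b - a)|
      = |(∫ y in a..b, r y) - r b * (b - a) / 2| := by rw [hint]; simp only [r]; ring_nf
    _ ≤ |∫ y in a..b, r y| + |r b| * |b - a| / 2 := by
      refine (abs_sub _ _).trans_eq ?_
      rw [abs_div, abs_mul, abs_two]
    _ ≤ ε * |b - a| * |b - a| + ε * |b - a| * |b - a| / 2 := by gcongr
    _ ≤ 2 * ε * (b - a) ^ 2 := by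
      rw [← sq_abs (b - a)]
      nlinarith [sq_nonneg |b - a|]

lemma hasDerivAt_intervalIntegral_param {f f₂ : ℝ × ℝ → ℝ} (hfc : Continuous f)
    (hf₂c : Continuous f₂) (hf₂ : ∀ p : ℝ × ℝ, HasDerivAt (fun w => f (p.1, w)) (f₂ p) p.2)
    (a x w : ℝ) :
    HasDerivAt (fun w => ∫ y in a..x, f (y, w)) (∫ y in a..x, f₂ (y, w)) w := by
  obtain ⟨C, hC⟩ := (isCompact_uIcc.prod (isCompact_closedBall w 1)).exists_bound_of_continuousOn
    hf₂c.continuousOn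
  refine (intervalIntegral.hasDerivAt_integral_of_dominated_loc_of_deriv_le
    (F := fun w y => f (y, w)) (F' := fun w y => f₂ (y, w)) (bound := fun _ => C)
    (Metric.ball_mem_nhds w one_pos)
    (Eventually.of_forall fun _ => (hfc.comp (by fun_prop)).aestronglyMeasurable)
    ((hfc.comp (by fun_prop)).intervalIntegrable a x)
    ((hf₂c.comp (by fun_prop)).aestronglyMeasurable)
    (Eventually.of_forall fun y hy w' hw' =>
      hC (y, w') ⟨uIoc_subset_uIcc hy, Metric.ball_subset_closedBall hw'⟩)
    intervalIntegrable_const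
    (Eventually.of_forall fun y _ w' _ => hf₂ (y, w'))).2

lemma continuous_of_hasDerivAt_intervalIntegral_param {f f₂ G : ℝ × ℝ → ℝ} (hfc : Continuous f)
    (hf₂c : Continuous f₂) (hf₂ : ∀ p : ℝ × ℝ, HasDerivAt (fun w => f (p.1, w)) (f₂ p) p.2)
    (a : ℝ) (hG : ∀ p : ℝ × ℝ, HasDerivAt (fun w => ∫ y in a..p.1, f (y, w)) (G p) p.2) :
    Continuous G := by
  have hG_eq : G = fun p => ∫ y in a..p.1, f₂ (y, p.2) :=
    funext fun p => (hG p).unique (hasDerivAt_intervalIntegral_param hfc hf₂c hf₂ a p.1 p.2)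
  rw [hG_eq]
  exact intervalIntegral.continuous_parametric_intervalIntegral_of_continuous (by fun_prop)
    continuous_fst

lemma abs_sub_trapezoid_sub_mul_le {f f₁ f₂ F F₂ : ℝ × ℝ → ℝ}
    (hf₁ : ∀ p : ℝ × ℝ, HasDerivAt (fun x => f (x, p.2)) (f₁ p) p.1)
    (hf₂ : ∀ p : ℝ × ℝ, HasDerivAt (fun w => f (p.1, w)) (f₂ p) p.2)
    (hF : ∀ p : ℝ × ℝ, F p = ∫ y in (0:ℝ)..p.1, f (y, p.2))
    (hF₂ : ∀ p : ℝ × ℝ, HasDerivAt (fun w => F (p.1, w)) (F₂ p) p.2)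
    {x₀ x₁ w₀ w₁ ε₁ C ε₃ : ℝ}
    (h₁ : ∀ y ∈ uIcc x₀ x₁, |f₁ (y, w₁) - f₁ (x₀, w₁)| ≤ ε₁)
    (h₂ : ∀ w ∈ uIcc w₀ w₁, |f₂ (x₀, w)| ≤ C)
    (h₃ : ∀ w ∈ uIcc w₀ w₁, |F₂ (x₀, w) - F₂ (x₀, w₀)| ≤ ε₃) :
    |F (x₁, w₁) - F (x₀, w₀) - (f (x₀, w₀) + f (x₁, w₁)) / 2 * (x₁ - x₀)
        - F₂ (x₀, w₀) * (w₁ - w₀)|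
      ≤ 2 * ε₁ * (x₁ - x₀) ^ 2 + C / 2 * |w₁ - w₀| * |x₁ - x₀| + ε₃ * |w₁ - w₀| := by
  have hfx : ∀ a b, IntervalIntegrable (fun y => f (y, w₁)) volume a b := fun a b =>
    (continuous_iff_continuousAt.2 fun y => (hf₁ (y, w₁)).continuousAt).intervalIntegrable a b
  have hFx : F (x₁, w₁) - F (x₀, w₁) = ∫ y in x₀..x₁, f (y, w₁) := by
    rw [hF, hF, intervalIntegral.integral_interval_sub_left (hfx 0 x₁) (hfx 0 x₀)]
  have hA₁ := abs_integral_sub_trapezoid_le (h := fun x => f (x, w₁)) (fun y _ => hf₁ (y, w₁)) h₁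
  have hA₂ : |f (x₀, w₁) - f (x₀, w₀)| ≤ C * |w₁ - w₀| := by
    simpa using abs_sub_sub_mul_le_of_hasDerivAt (h := fun w => f (x₀, w)) (c := 0)
      (fun w _ => hf₂ (x₀, w)) (by simpa using h₂)
  have hA₃ :=
    abs_sub_sub_mul_le_of_hasDerivAt (h := fun w => F (x₀, w)) (fun w _ => hF₂ (x₀, w)) h₃
  have hsplit : F (x₁, w₁) - F (x₀, w₀) - (f (x₀, w₀) + f (x₁, w₁)) / 2 * (x₁ - x₀)
      - F₂ (x₀, w₀) * (w₁ - w₀)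
      = ((∫ y in x₀..x₁, f (y, w₁)) - (f (x₀, w₁) + f (x₁, w₁)) / 2 * (x₁ - x₀))
        + (f (x₀, w₁) - f (x₀, w₀)) / 2 * (x₁ - x₀)
        + (F (x₀, w₁) - F (x₀, w₀) - F₂ (x₀, w₀) * (w₁ - w₀)) := by
    rw [← hFx]; ring
  have hmid : |(f (x₀, w₁) - f (x₀, w₀)) / 2 * (x₁ - x₀)| ≤ C / 2 * |w₁ - w₀| * |x₁ - x₀| := by
    rw [abs_mul, abs_div, abs_two]
    gcongr
    linarith
  rw [hsplit]
  exact (abs_add_three _ _ _).trans (add_le_add (add_le_add hA₁ hmid) hA₃)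

lemma exists_pos_abs_sub_trapezoid_sub_mul_le {f f₁ f₂ F F₂ : ℝ × ℝ → ℝ}
    (hf₁ : ∀ p : ℝ × ℝ, HasDerivAt (fun x => f (x, p.2)) (f₁ p) p.1)
    (hf₂ : ∀ p : ℝ × ℝ, HasDerivAt (fun w => f (p.1, w)) (f₂ p) p.2)
    (hf₁c : Continuous f₁) (hf₂c : Continuous f₂)
    (hF : ∀ p : ℝ × ℝ, F p = ∫ y in (0:ℝ)..p.1, f (y, p.2))
    (hF₂ : ∀ p : ℝ × ℝ, HasDerivAt (fun w => F (p.1, w)) (F₂ p) p.2) (hF₂c : Continuous F₂)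
    (R : ℝ) {ε : ℝ} (hε : 0 < ε) :
    ∃ δ > 0, ∀ x₀ ∈ Icc (-R) R, ∀ x₁ ∈ Icc (-R) R, ∀ w₀ ∈ Icc (-R) R, ∀ w₁ ∈ Icc (-R) R,
      |x₁ - x₀| ≤ δ → |w₁ - w₀| ≤ δ →
      |F (x₁, w₁) - F (x₀, w₀) - (f (x₀, w₀) + f (x₁, w₁)) / 2 * (x₁ - x₀)
          - F₂ (x₀, w₀) * (w₁ - w₀)| ≤ ε * (x₁ - x₀) ^ 2 + ε * |w₁ - w₀| := by
  have hK : IsCompact (Icc (-R) R ×ˢ Icc (-R) R) := isCompact_Icc.prod isCompact_Icc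
  obtain ⟨C, hC⟩ := hK.exists_bound_of_continuousOn hf₂c.continuousOn
  obtain ⟨δ₁, hδ₁, hf₁δ⟩ := Metric.uniformContinuousOn_iff_le.1
    (hK.uniformContinuousOn_of_continuous hf₁c.continuousOn) (ε / 2) (by positivity)
  obtain ⟨δ₃, hδ₃, hF₂δ⟩ := Metric.uniformContinuousOn_iff_le.1
    (hK.uniformContinuousOn_of_continuous hF₂c.continuousOn) (ε / 2) (by positivity)
  refine ⟨min (min δ₁ δ₃) (ε / (|C| + 1)), by positivity,
    fun x₀ hx₀ x₁ hx₁ w₀ hw₀ w₁ hw₁ hx hw => ?_⟩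
  simp only [le_min_iff] at hx hw
  have hbound := abs_sub_trapezoid_sub_mul_le hf₁ hf₂ hF hF₂ (ε₁ := ε / 2) (C := |C|)
    (ε₃ := ε / 2)
    (fun y hy => hf₁δ _ ⟨uIcc_subset_Icc hx₀ hx₁ hy, hw₁⟩ _ ⟨hx₀, hw₁⟩ <| by
      rw [Prod.dist_eq, dist_self, Real.dist_eq]
      exact max_le ((abs_sub_left_of_mem_uIcc hy).trans hx.1.1) hδ₁.le)
    (fun w hw => (hC _ ⟨hx₀, uIcc_subset_Icc hw₀ hw₁ hw⟩).trans (le_abs_self C))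
    (fun w hw' => hF₂δ _ ⟨hx₀, uIcc_subset_Icc hw₀ hw₁ hw'⟩ _ ⟨hx₀, hw₀⟩ <| by
      rw [Prod.dist_eq, dist_self, Real.dist_eq]
      exact max_le hδ₃.le ((abs_sub_left_of_mem_uIcc hw').trans hw.1.2))
  have hCx : |C| * |x₁ - x₀| ≤ ε := by
    calc |C| * |x₁ - x₀| ≤ (|C| + 1) * (ε / (|C| + 1)) :=
          mul_le_mul (by linarith) hx.2 (abs_nonneg _) (by positivity)
      _ = ε := mul_div_cancel₀ ε (by positivity)
  refine hbound.trans ?_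
  nlinarith [abs_nonneg (w₁ - w₀)]

lemma tendsto_sum_trapezoid_add_sum_mul_sub {a b : ℝ} {j : ℕ → ℕ} {t : ℕ → ℕ → ℝ}
    (h : IsFinePartitionSeq a b j t) {u v : ℝ → ℝ} (hu : ContinuousOn u (Icc a b))
    (hv : ContinuousOn v (Icc a b)) (hbv : BoundedVariationOn v (Icc a b))
    (hquad : ∃ M : ℝ, ∀ n, ∑ k ∈ Finset.range (j n), (u (t n (k + 1)) - u (t n k)) ^ 2 ≤ M)
    {f f₁ f₂ F F₂ : ℝ × ℝ → ℝ}
    (hf₁ : ∀ p : ℝ × ℝ, HasDerivAt (fun x => f (x, p.2)) (f₁ p) p.1)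
    (hf₂ : ∀ p : ℝ × ℝ, HasDerivAt (fun w => f (p.1, w)) (f₂ p) p.2)
    (hf₁c : Continuous f₁) (hf₂c : Continuous f₂)
    (hF : ∀ p : ℝ × ℝ, F p = ∫ y in (0:ℝ)..p.1, f (y, p.2))
    (hF₂ : ∀ p : ℝ × ℝ, HasDerivAt (fun w => F (p.1, w)) (F₂ p) p.2) (hF₂c : Continuous F₂) :
    Tendsto (fun n => ∑ k ∈ Finset.range (j n),
        (f (u (t n k), v (t n k)) + f (u (t n (k + 1)), v (t n (k + 1)))) / 2
          * (u (t n (k + 1)) - u (t n k))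
        + ∑ k ∈ Finset.range (j n), F₂ (u (t n k), v (t n k)) * (v (t n (k + 1)) - v (t n k)))
      atTop (𝓝 (F (u b, v b) - F (u a, v a))) := by
  obtain ⟨M, hM⟩ := hquad
  obtain ⟨Ru, hRu⟩ := isCompact_Icc.exists_bound_of_continuousOn hu
  obtain ⟨Rv, hRv⟩ := isCompact_Icc.exists_bound_of_continuousOn hv
  have hmemR : ∀ n, ∀ k ≤ j n, u (t n k) ∈ Icc (-max Ru Rv) (max Ru Rv) ∧
      v (t n k) ∈ Icc (-max Ru Rv) (max Ru Rv) := fun n k hk =>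
    ⟨abs_le.1 ((hRu _ (h.mem_Icc n hk)).trans (le_max_left _ _)),
      abs_le.1 ((hRv _ (h.mem_Icc n hk)).trans (le_max_right _ _))⟩
  refine tendsto_of_forall_eventually_abs_sub_le_mul
    (K := M + (eVariationOn v (Icc a b)).toReal) fun ε hε => ?_
  obtain ⟨δ, hδ, hloc⟩ := exists_pos_abs_sub_trapezoid_sub_mul_le hf₁ hf₂ hf₁c hf₂c hF hF₂ hF₂c
    (max Ru Rv) hε
  filter_upwards [h.eventually_forall_dist_le hu hδ, h.eventually_forall_dist_le hv hδ]
    with n hun hvn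
  have htele : F (u b, v b) - F (u a, v a) = ∑ k ∈ Finset.range (j n),
      (F (u (t n (k + 1)), v (t n (k + 1))) - F (u (t n k), v (t n k))) := by
    rw [Finset.sum_range_sub (fun k => F (u (t n k), v (t n k))), h.last n, h.zero n]
  rw [abs_sub_comm, htele, ← Finset.sum_add_distrib, ← Finset.sum_sub_distrib]
  calc _ ≤ ∑ k ∈ Finset.range (j n),
        (ε * (u (t n (k + 1)) - u (t n k)) ^ 2 + ε * |v (t n (k + 1)) - v (t n k)|) := by
        refine (Finset.abs_sum_le_sum_abs _ _).trans (Finset.sum_le_sum fun k hk => ?_)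
        rw [Finset.mem_range] at hk
        rw [sub_add_eq_sub_sub]
        exact hloc _ (hmemR n k hk.le).1 _ (hmemR n (k + 1) hk).1 _ (hmemR n k hk.le).2 _
          (hmemR n (k + 1) hk).2 (hun k hk) (hvn k hk)
    _ = ε * (∑ k ∈ Finset.range (j n), (u (t n (k + 1)) - u (t n k)) ^ 2
          + ∑ k ∈ Finset.range (j n), |v (t n (k + 1)) - v (t n k)|) := by
        rw [Finset.sum_add_distrib, mul_add, Finset.mul_sum, Finset.mul_sum]
    _ ≤ ε * (M + (eVariationOn v (Icc a b)).toReal) := by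
        gcongr
        exacts [hM n, h.sum_abs_sub_le_eVariationOn hbv n]

theorem stmt_13_general (T : ℝ)
    (u v : ℝ → ℝ)
    (hu : ContinuousOn u (Set.Icc 0 T))
    (hv : ContinuousOn v (Set.Icc 0 T))
    (hbv : BoundedVariationOn v (Set.Icc 0 T))
    (j : ℕ → ℕ)
    (t : ℕ → ℕ → ℝ)
    (ht0 : ∀ n, t n 0 = 0) (htT : ∀ n, t n (j n) = T)
    (hmono : ∀ n, ∀ k < j n, t n k < t n (k+1))
    (hmesh : ∀ δ : ℝ, 0 < δ → ∃ N, ∀ n ≥ N, ∀ k < j n, t n (k+1) - t n k < δ)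
    (hquad : ∃ M : ℝ, ∀ n,
      ∑ k ∈ Finset.range (j n), (u (t n (k+1)) - u (t n k)) ^ 2 ≤ M)
    (f f1 f2 F2 : ℝ × ℝ → ℝ)
    (hf1 : ∀ p : ℝ × ℝ, HasDerivAt (fun x => f (x, p.2)) (f1 p) p.1)
    (hf2 : ∀ p : ℝ × ℝ, HasDerivAt (fun w => f (p.1, w)) (f2 p) p.2)
    (hfc : Continuous f) (hf1c : Continuous f1) (hf2c : Continuous f2)
    (F : ℝ × ℝ → ℝ) (hF : ∀ p : ℝ × ℝ, F p = ∫ y in (0:ℝ)..p.1, f (y, p.2))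
    (hF2 : ∀ p : ℝ × ℝ, HasDerivAt (fun w => F (p.1, w)) (F2 p) p.2) :
    ∃ L : ℝ,
      Tendsto (fun n => ∑ k ∈ Finset.range (j n),
          F2 (u (t n k), v (t n k)) * (v (t n (k+1)) - v (t n k))) atTop (nhds L) ∧
      Tendsto (fun n => ∑ k ∈ Finset.range (j n),
          (f (u (t n k), v (t n k)) + f (u (t n (k+1)), v (t n (k+1)))) / 2
            * (u (t n (k+1)) - u (t n k))) atTop
        (nhds (F (u T, v T) - F (u 0, v 0) - L)) := by
  have hpart : IsFinePartitionSeq 0 T j t :=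
    { zero := ht0
      last := htT
      monotoneOn := fun n => (strictMonoOn_Iic_of_lt_succ (hmono n)).monotoneOn
      mesh_le := fun δ hδ => eventually_atTop.2
        ((hmesh δ hδ).imp fun _ hN n hn k hk => (hN n hn k hk).le) }
  have hF2c : Continuous F2 := continuous_of_hasDerivAt_intervalIntegral_param hfc hf2c hf2 0
    fun p => by simpa only [hF] using hF2 p
  obtain ⟨L, hL⟩ := hbv.exists_tendsto_sum_mul_sub hpart (hF2c.comp_continuousOn (hu.prodMk hv)) hv
  refine ⟨L, hL, ?_⟩
  have hsum := tendsto_sum_trapezoid_add_sum_mul_sub hpart hu hv hbv hquad hf1 hf2 hf1c hf2c hF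
    hF2 hF2c
  simpa only [add_sub_cancel_right, Function.comp_apply] using hsum.sub hL

theorem stmt_13 (T : ℝ) (hT : 0 < T)
    (u v : ℝ → ℝ)
    (hu : ContinuousOn u (Set.Icc 0 T))
    (hv : ContinuousOn v (Set.Icc 0 T))
    (hbv : BoundedVariationOn v (Set.Icc 0 T))
    (j : ℕ → ℕ) (hj : ∀ n, 0 < j n)
    (t : ℕ → ℕ → ℝ)
    (ht0 : ∀ n, t n 0 = 0) (htT : ∀ n, t n (j n) = T)
    (hmono : ∀ n, ∀ k < j n, t n k < t n (k+1))
    (hmesh : ∀ δ : ℝ, 0 < δ → ∃ N, ∀ n ≥ N, ∀ k < j n, t n (k+1) - t n k < δ)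
    (hquad : ∃ M : ℝ, ∀ n,
      ∑ k ∈ Finset.range (j n), (u (t n (k+1)) - u (t n k)) ^ 2 ≤ M)
    (f f1 f2 F2 : ℝ × ℝ → ℝ)
    (hf1 : ∀ p : ℝ × ℝ, HasDerivAt (fun x => f (x, p.2)) (f1 p) p.1)
    (hf2 : ∀ p : ℝ × ℝ, HasDerivAt (fun w => f (p.1, w)) (f2 p) p.2)
    (hfc : Continuous f) (hf1c : Continuous f1) (hf2c : Continuous f2)
    (F : ℝ × ℝ → ℝ) (hF : ∀ p : ℝ × ℝ, F p = ∫ y in (0:ℝ)..p.1, f (y, p.2))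
    (hF2 : ∀ p : ℝ × ℝ, HasDerivAt (fun w => F (p.1, w)) (F2 p) p.2) :
    ∃ L : ℝ,
      Tendsto (fun n => ∑ k ∈ Finset.range (j n),
          F2 (u (t n k), v (t n k)) * (v (t n (k+1)) - v (t n k))) atTop (nhds L) ∧
      Tendsto (fun n => ∑ k ∈ Finset.range (j n),
          (f (u (t n k), v (t n k)) + f (u (t n (k+1)), v (t n (k+1)))) / 2
            * (u (t n (k+1)) - u (t n k))) atTop
        (nhds (F (u T, v T) - F (u 0, v 0) - L)) :=
  stmt_13_general T u v hu hv hbv j t ht0 htT hmono hmesh hquad f f1 f2 F2 hf1 hf2 hfc hf1c hf2c F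
    hF hF2
end

section
/- Let (c_i)_{i≥1} satisfy |c_i| ≤ 1 and suppose c_i = 0 for i ≥ M. Define u(s) = ∑_{i<M} c_i sin(is)/i. Then for the dyadic partition Δ_{kn} = (2π(k-1)2^{-n}, 2πk 2^{-n}], the sums S_n = ∑_{k=1}^{2^n} (u(2πk2^{-n}) - u(2π(k-1)2^{-n}))² satisfy S_n = 2 ∑_{i<M} c_i² (2^n/i²) sin²(i 2^{-n} π) for all n with 2^n > 2M, and consequently S_n → 0 as n → ∞. -/
/-!
By `sin b - sin a = 2 sin ((b - a) / 2) cos ((a + b) / 2)`, the increment of `u` over the `k`-th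
interval of the partition of `[0, 2π]` into `N` pieces is `∑ i, (2 cᵢ sin (iπ/N) / i) cos (i θₖ)`,
with `θₖ = (2k+1)π/N` the midpoint. For `0 < |m| < N` the sum `∑ₖ cos (m θₖ)` vanishes, as
multiplying it by `2 sin (mπ/N) ≠ 0` makes it telescope to `sin (2mπ) = 0`. Hence the cosines
`cos (i θₖ)` with `0 < i < N/2` are orthogonal, each of squared norm `N/2`, and the sum of the
squared increments is `N/2 ∑ᵢ (2 cᵢ sin (iπ/N) / i)²`. Since `sin² x ≤ x²`, the `i`-th term is at
most `cᵢ² π² / N`, which tends to `0` along `N = 2ⁿ`.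
-/

open Real Filter Finset Topology

theorem sum_range_cos_mul_odd_eq_zero {N : ℕ} {m : ℤ} (hm : ¬ (N : ℤ) ∣ m) :
    ∑ k ∈ range N, cos (m * ((2 * k + 1) * π / N)) = 0 := by
  rcases eq_or_ne N 0 with rfl | hN
  · simp
  set a : ℝ := m * π / N with ha_def
  have hN' : (N : ℝ) ≠ 0 := Nat.cast_ne_zero.mpr hN
  have ha : sin a ≠ 0 := by
    rw [Ne, sin_eq_zero_iff]
    rintro ⟨t, ht⟩
    refine hm ⟨t, ?_⟩
    rw [ha_def, eq_div_iff hN'] at ht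
    have : (m : ℝ) = N * t := by
      apply mul_right_cancel₀ pi_ne_zero
      linarith
    exact_mod_cast this
  have htel : 2 * sin a * ∑ k ∈ range N, cos (m * ((2 * k + 1) * π / N)) = sin (2 * N * a) := by
    have hstep : ∀ k : ℕ, 2 * sin a * cos (m * ((2 * k + 1) * π / N))
        = sin (2 * (k + 1 : ℕ) * a) - sin (2 * k * a) := by
      intro k
      rw [show (m : ℝ) * ((2 * k + 1) * π / N) = (2 * k + 1) * a by rw [ha_def]; ring,
        two_mul_sin_mul_cos, sub_eq_add_neg (sin _), ← sin_neg, add_comm]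
      congr 2 <;> push_cast <;> ring
    rw [mul_sum, sum_congr rfl fun k _ => hstep k, sum_range_sub (fun k => sin (2 * k * a))]
    simp
  have hend : sin (2 * N * a) = 0 := by
    rw [show 2 * N * a = ((2 * m : ℤ) : ℝ) * π by rw [ha_def]; push_cast; field_simp]
    exact sin_int_mul_pi _
  rw [hend] at htel
  exact (mul_eq_zero.mp htel).resolve_left (mul_ne_zero two_ne_zero ha)

theorem sum_range_cos_mul_cos_odd {N i j : ℕ} (hi : 0 < i) (hj : 0 < j) (hij : i + j < N) :
    ∑ k ∈ range N, cos (i * ((2 * k + 1) * π / N)) * cos (j * ((2 * k + 1) * π / N))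
      = if i = j then (N : ℝ) / 2 else 0 := by
  have hvanish : ∀ m : ℤ, m ≠ 0 → |m| < N → ∑ k ∈ range N, cos (m * ((2 * k + 1) * π / N)) = 0 :=
    fun m hm0 hmN => sum_range_cos_mul_odd_eq_zero fun hdvd => by
      have := Int.le_of_dvd (abs_pos.mpr hm0) ((dvd_abs _ _).mpr hdvd)
      omega
  have hprod : ∀ k : ℕ, cos (i * ((2 * k + 1) * π / N)) * cos (j * ((2 * k + 1) * π / N))
      = (cos (((i - j : ℤ) : ℝ) * ((2 * k + 1) * π / N))
          + cos (((i + j : ℤ) : ℝ) * ((2 * k + 1) * π / N))) / 2 := by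
    intro k
    set θ : ℝ := (2 * k + 1) * π / N
    push_cast
    rw [sub_mul, add_mul, ← two_mul_cos_mul_cos]
    ring
  rw [sum_congr rfl fun k _ => hprod k, ← sum_div, sum_add_distrib,
    hvanish (i + j) (by omega) (by rw [abs_lt]; omega)]
  split_ifs with h
  · subst h
    simp
  · rw [hvanish (i - j) (by omega) (by rw [abs_lt]; omega)]
    simp

theorem sum_range_sq_sum_mul_cos_odd {N : ℕ} {s : Finset ℕ} (hs : ∀ i ∈ s, 0 < i ∧ 2 * i < N)
    (d : ℕ → ℝ) :
    ∑ k ∈ range N, (∑ i ∈ s, d i * cos (i * ((2 * k + 1) * π / N))) ^ 2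
      = N / 2 * ∑ i ∈ s, d i ^ 2 := by
  calc ∑ k ∈ range N, (∑ i ∈ s, d i * cos (i * ((2 * k + 1) * π / N))) ^ 2
      = ∑ i ∈ s, ∑ j ∈ s, d i * d j *
          ∑ k ∈ range N, cos (i * ((2 * k + 1) * π / N)) * cos (j * ((2 * k + 1) * π / N)) := by
        simp_rw [sq, sum_mul_sum, mul_sum]
        rw [sum_comm]
        refine sum_congr rfl fun i _ => ?_
        rw [sum_comm]
        exact sum_congr rfl fun j _ => sum_congr rfl fun k _ => by ring
    _ = ∑ i ∈ s, ∑ j ∈ s, if i = j then d i * d j * (N / 2) else 0 := by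
        refine sum_congr rfl fun i hi => sum_congr rfl fun j hj => ?_
        rw [sum_range_cos_mul_cos_odd (hs i hi).1 (hs j hj).1 (by linarith [hs i hi, hs j hj])]
        split_ifs <;> simp
    _ = N / 2 * ∑ i ∈ s, d i ^ 2 := by
        simp only [sum_ite_eq, mul_sum]
        exact sum_congr rfl fun i hi => by simp [hi]; ring

theorem sum_range_sq_sub_of_eq_sum_sin_div {N M : ℕ} (hM : 2 * M < N) (c : ℕ → ℝ) (u : ℝ → ℝ)
    (hu : ∀ s : ℝ, u s = ∑ i ∈ Ico 1 M, c i * sin (i * s) / i) :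
    ∑ k ∈ range N, (u (2 * π * (k + 1) / N) - u (2 * π * k / N)) ^ 2
      = 2 * ∑ i ∈ Ico 1 M, c i ^ 2 * (N / (i : ℝ) ^ 2) * sin (i * π / N) ^ 2 := by
  have hinc : ∀ k : ℕ, u (2 * π * (k + 1) / N) - u (2 * π * k / N)
      = ∑ i ∈ Ico 1 M, 2 * c i * sin (i * π / N) / i * cos (i * ((2 * k + 1) * π / N)) := by
    intro k
    rw [hu, hu, ← sum_sub_distrib]
    refine sum_congr rfl fun i _ => ?_
    rw [← sub_div, ← mul_sub, sin_sub_sin,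
      show (i * (2 * π * (k + 1) / N) - i * (2 * π * k / N)) / 2 = i * π / N by ring,
      show (i * (2 * π * (k + 1) / N) + i * (2 * π * k / N)) / 2 = i * ((2 * k + 1) * π / N) by
        ring]
    ring
  have hfreq : ∀ i ∈ Ico 1 M, 0 < i ∧ 2 * i < N := fun i hi => by
    rw [mem_Ico] at hi
    omega
  simp_rw [hinc]
  rw [sum_range_sq_sum_mul_cos_odd hfreq, mul_sum, mul_sum]
  refine sum_congr rfl fun i hi => ?_
  have hi : (i : ℝ) ≠ 0 := Nat.cast_ne_zero.mpr (hfreq i hi).1.ne'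
  field_simp

theorem div_sq_mul_sin_sq_le {N : ℝ} (hN : 0 < N) (x : ℝ) :
    N / x ^ 2 * sin (x * π / N) ^ 2 ≤ π ^ 2 / N := by
  rcases eq_or_ne x 0 with rfl | hx
  · rw [zero_pow two_ne_zero, div_zero, zero_mul]
    positivity
  calc N / x ^ 2 * sin (x * π / N) ^ 2 ≤ N / x ^ 2 * (x * π / N) ^ 2 :=
        mul_le_mul_of_nonneg_left sin_sq_le_sq (by positivity)
    _ = π ^ 2 / N := by field_simp

theorem tendsto_two_pow_div_sq_mul_sin_sq (x : ℝ) :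
    Tendsto (fun n : ℕ => (2 : ℝ) ^ n / x ^ 2 * sin (x * π / 2 ^ n) ^ 2) atTop (𝓝 0) :=
  squeeze_zero (fun n => by positivity) (fun n => div_sq_mul_sin_sq_le (by positivity) x)
    (tendsto_const_nhds.div_atTop (tendsto_pow_atTop_atTop_of_one_lt one_lt_two))

theorem stmt_17_general (c : ℕ → ℝ) (M : ℕ)
    (u : ℝ → ℝ)
    (hu : ∀ s : ℝ, u s = ∑ i ∈ Finset.Ico 1 M, c i * Real.sin (i * s) / i)
    (S : ℕ → ℝ)
    (hS : ∀ n : ℕ, S n = ∑ k ∈ Finset.range (2^n),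
      (u (2 * π * (k+1) / 2^n) - u (2 * π * k / 2^n)) ^ 2) :
    (∀ n : ℕ, 2 * M < 2^n →
      S n = 2 * ∑ i ∈ Finset.Ico 1 M,
        c i ^ 2 * ((2:ℝ)^n / (i:ℝ)^2) * Real.sin (i * π / 2^n) ^ 2) ∧
    Tendsto S atTop (nhds 0) := by
  have hident : ∀ n : ℕ, 2 * M < 2^n →
      S n = 2 * ∑ i ∈ Finset.Ico 1 M,
        c i ^ 2 * ((2:ℝ)^n / (i:ℝ)^2) * Real.sin (i * π / 2^n) ^ 2 := by
    intro n hn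
    rw [hS]
    exact_mod_cast sum_range_sq_sub_of_eq_sum_sin_div hn c u hu
  refine ⟨hident, ?_⟩
  have hlim : Tendsto (fun n : ℕ => 2 * ∑ i ∈ Ico 1 M,
      c i ^ 2 * ((2 : ℝ) ^ n / (i : ℝ) ^ 2) * sin (i * π / 2 ^ n) ^ 2) atTop (𝓝 0) := by
    simpa [mul_assoc] using (tendsto_finsetSum (Ico 1 M) fun i _ =>
      (tendsto_two_pow_div_sq_mul_sin_sq i).const_mul (c i ^ 2)).const_mul 2
  refine hlim.congr' ?_
  filter_upwards [eventually_gt_atTop (2 * M)] with n hn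
  exact (hident n (hn.trans Nat.lt_two_pow_self)).symm

theorem stmt_17 (c : ℕ → ℝ) (hc : ∀ i, |c i| ≤ 1) (M : ℕ)
    (hM : ∀ i, M ≤ i → c i = 0)
    (u : ℝ → ℝ)
    (hu : ∀ s : ℝ, u s = ∑ i ∈ Finset.Ico 1 M, c i * Real.sin (i * s) / i)
    (S : ℕ → ℝ)
    (hS : ∀ n : ℕ, S n = ∑ k ∈ Finset.range (2^n),
      (u (2 * π * (k+1) / 2^n) - u (2 * π * k / 2^n)) ^ 2) :
    (∀ n : ℕ, 2 * M < 2^n →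
      S n = 2 * ∑ i ∈ Finset.Ico 1 M,
        c i ^ 2 * ((2:ℝ)^n / (i:ℝ)^2) * Real.sin (i * π / 2^n) ^ 2) ∧
    Tendsto S atTop (nhds 0) :=
  stmt_17_general c M u hu S hS
end
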